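/- Let F be a distribution function on (0,∞) whose tail quantile function U(t) = F^{←}(1−1/t) is regularly varying with index γ ∈ (0,1). Then lim_{τ↑1} ES(τ)/VaR(τ) = 1/(1−γ), where VaR(τ) = U(1/(1−τ)) and ES(τ) = (1/(1−τ)) ∫_τ^1 VaR(α) dα. -/

import Mathlib

/-!
Substituting `α = 1 - (1 - τ) s` turns `ES(τ)/VaR(τ)` into `∫₀¹ U(t/s)/U(t) ds` with
`t = 1/(1 - τ) → ∞`. The integrand tends to `s^(-γ)`, and iterating the doubling bound
`U(2t) ≤ 2^ρ U(t)` (valid for large `t` whenever `γ < ρ`) together with monotonicity of `U`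
dominates it by `2^ρ s^(-ρ)`, which is integrable for `ρ < 1`. Dominated convergence then gives
`∫₀¹ s^(-γ) ds = 1/(1 - γ)`.
-/

open Filter Real intervalIntegral Topology

lemma le_two_rpow_mul_rpow_mul_of_doubling {U : ℝ → ℝ} {ρ T : ℝ} (hU : Monotone U)
    (hρ : 0 ≤ ρ) (hT : 0 ≤ T) (hUnonneg : ∀ t, T ≤ t → 0 ≤ U t)
    (hdoubling : ∀ t, T ≤ t → U (t * 2) ≤ 2 ^ ρ * U t) {t x : ℝ} (ht : T ≤ t) (hx : 1 ≤ x) :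
    U (t * x) ≤ 2 ^ ρ * x ^ ρ * U t := by
  have hpow : ∀ n : ℕ, U (t * 2 ^ n) ≤ (2 ^ ρ) ^ n * U t := by
    intro n
    induction n with
    | zero => simp
    | succ n ih =>
      have htn : T ≤ t * 2 ^ n :=
        ht.trans (le_mul_of_one_le_right (hT.trans ht) (one_le_pow₀ one_le_two))
      calc U (t * 2 ^ (n + 1)) = U (t * 2 ^ n * 2) := by rw [pow_succ, mul_assoc]
        _ ≤ 2 ^ ρ * U (t * 2 ^ n) := hdoubling _ htn
        _ ≤ 2 ^ ρ * ((2 ^ ρ) ^ n * U t) := by gcongr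
        _ = (2 ^ ρ) ^ (n + 1) * U t := by ring
  obtain ⟨n, hnx, hxn⟩ := exists_nat_pow_near hx one_lt_two
  calc U (t * x) ≤ U (t * 2 ^ (n + 1)) := hU (mul_le_mul_of_nonneg_left hxn.le (hT.trans ht))
    _ ≤ (2 ^ ρ) ^ (n + 1) * U t := hpow _
    _ = 2 ^ ρ * ((2 : ℝ) ^ n) ^ ρ * U t := by rw [pow_succ', rpow_pow_comm zero_le_two]
    _ ≤ 2 ^ ρ * x ^ ρ * U t := by gcongr; exact hUnonneg t ht

lemma eventually_le_two_rpow_mul_rpow_mul {U : ℝ → ℝ} {γ ρ : ℝ} (hU : Monotone U)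
    (hUpos : ∀ t, 1 ≤ t → 0 < U t)
    (hRV : Tendsto (fun t => U (t * 2) / U t) atTop (𝓝 (2 ^ γ))) (hγρ : γ < ρ) (hρ : 0 ≤ ρ) :
    ∀ᶠ t in atTop, ∀ x, 1 ≤ x → U (t * x) ≤ 2 ^ ρ * x ^ ρ * U t := by
  have hlt : ∀ᶠ t in atTop, U (t * 2) / U t < 2 ^ ρ :=
    hRV.eventually_lt_const (rpow_lt_rpow_of_exponent_lt one_lt_two hγρ)
  obtain ⟨T, hT⟩ := (hlt.and (eventually_ge_atTop 1)).exists_forall_of_atTop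
  have hdoubling : ∀ t, max T 1 ≤ t → U (t * 2) ≤ 2 ^ ρ * U t := fun t ht =>
    have ⟨hratio, ht1⟩ := hT t (le_of_max_le_left ht)
    ((div_lt_iff₀ (hUpos t ht1)).1 hratio).le
  filter_upwards [eventually_ge_atTop (max T 1)] with t ht x hx
  exact le_two_rpow_mul_rpow_mul_of_doubling hU hρ (zero_le_one.trans (le_max_right _ _))
    (fun s hs => (hUpos s (le_of_max_le_right hs)).le) hdoubling ht hx

lemma integral_rpow_neg_zero_one {γ : ℝ} (hγ : γ < 1) :
    ∫ s in (0 : ℝ)..1, s ^ (-γ) = 1 / (1 - γ) := by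
  rw [integral_rpow (Or.inl (by linarith)), one_rpow, zero_rpow (by linarith)]
  ring_nf

lemma tendsto_integral_div_of_regularlyVarying {U : ℝ → ℝ} {γ : ℝ} (hγ : γ < 1)
    (hU : Monotone U) (hUpos : ∀ t, 1 ≤ t → 0 < U t)
    (hRV : ∀ x, 0 < x → Tendsto (fun t => U (t * x) / U t) atTop (𝓝 (x ^ γ))) :
    Tendsto (fun t => ∫ s in (0 : ℝ)..1, U (t * s⁻¹) / U t) atTop (𝓝 (1 / (1 - γ))) := by
  obtain ⟨ρ, hρ, hρ1⟩ := exists_between (max_lt hγ one_pos)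
  have hPotter := eventually_le_two_rpow_mul_rpow_mul hU hUpos (hRV 2 two_pos)
    ((le_max_left _ _).trans_lt hρ) ((le_max_right _ _).trans hρ.le)
  rw [← integral_rpow_neg_zero_one hγ]
  refine tendsto_integral_filter_of_dominated_convergence (fun s => 2 ^ ρ * s ^ (-ρ)) ?_ ?_ ?_ ?_
  · exact .of_forall fun t =>
      ((hU.measurable.comp (measurable_const.mul measurable_inv)).div_const _).aestronglyMeasurable
  · filter_upwards [hPotter, eventually_ge_atTop 1] with t hbound ht
    refine MeasureTheory.ae_of_all _ fun s hs => ?_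
    rw [Set.uIoc_of_le zero_le_one] at hs
    have hs1 : 1 ≤ s⁻¹ := one_le_inv_iff₀.2 hs
    rw [norm_of_nonneg (div_nonneg (hUpos _ (by nlinarith)).le (hUpos t ht).le),
      div_le_iff₀ (hUpos t ht), rpow_neg hs.1.le, ← inv_rpow hs.1.le]
    exact hbound _ hs1
  · exact (intervalIntegrable_rpow' (by linarith)).const_mul _
  · refine MeasureTheory.ae_of_all _ fun s hs => ?_
    rw [Set.uIoc_of_le zero_le_one] at hs
    rw [rpow_neg hs.1.le, ← inv_rpow hs.1.le]
    exact hRV _ (inv_pos.2 hs.1)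

lemma integral_comp_one_sub_eq_smul {E : Type*} [NormedAddCommGroup E] [NormedSpace ℝ E]
    (g : ℝ → E) (τ : ℝ) :
    ∫ α in τ..1, g (1 - α) = (1 - τ) • ∫ s in (0 : ℝ)..1, g ((1 - τ) * s) := by
  rw [smul_integral_comp_mul_left, integral_comp_sub_left, sub_self, mul_zero, mul_one]

lemma tendsto_inv_one_sub_nhdsLT_one : Tendsto (fun τ : ℝ => (1 - τ)⁻¹) (𝓝[<] 1) atTop := by
  refine tendsto_inv_nhdsGT_zero.comp
    (tendsto_nhdsWithin_of_tendsto_nhds_of_eventually_within _ ?_ ?_)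
  · exact (Continuous.tendsto' (by fun_prop) 1 0 (by norm_num)).mono_left nhdsWithin_le_nhds
  · filter_upwards [self_mem_nhdsWithin] with τ hτ using sub_pos.2 (Set.mem_Iio.1 hτ)

/-- If the tail quantile function `U(t) = F^←(1−1/t)` is regularly varying with index
`γ ∈ (0,1)`, then `ES(τ)/VaR(τ) → 1/(1−γ)` as `τ ↑ 1`, where `VaR(τ) = U(1/(1−τ))`
and `ES(τ) = (1/(1−τ)) ∫_τ^1 VaR(α) dα`. -/
theorem es_div_var_tendsto (U : ℝ → ℝ) (γ : ℝ) (hγ : γ ∈ Set.Ioo (0:ℝ) 1)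
    (hUmono : Monotone U) (hUpos : ∀ t : ℝ, 1 ≤ t → 0 < U t)
    (hRV : ∀ x : ℝ, 0 < x →
      Tendsto (fun t : ℝ => U (t * x) / U t) atTop (nhds (x ^ γ))) :
    Tendsto (fun τ : ℝ =>
        ((1 - τ)⁻¹ * ∫ α in τ..1, U (1 / (1 - α))) / U (1 / (1 - τ)))
      (nhdsWithin 1 (Set.Iio 1)) (nhds (1 / (1 - γ))) := by
  refine ((tendsto_integral_div_of_regularlyVarying hγ.2 hUmono hUpos hRV).comp
    tendsto_inv_one_sub_nhdsLT_one).congr' ?_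
  filter_upwards [self_mem_nhdsWithin] with τ hτ
  have hτ0 : 1 - τ ≠ 0 := (sub_pos.2 (Set.mem_Iio.1 hτ)).ne'
  rw [Function.comp_apply, integral_comp_one_sub_eq_smul (fun u => U (1 / u)), smul_eq_mul,
    inv_mul_cancel_left₀ hτ0, integral_div]
  simp only [one_div, mul_inv]
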